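/- arXiv:2203.14702 — 2 statements merged into one kernel-verified Lean document; each statement's English description precedes it below -/
import Mathlib

section
/- Let (V, μ) and (H, ν) be σ-finite measure spaces, E : ℝᵈ × V × H → ℝ an energy with finite partition function Z(ψ) and finite conditional normalizers Z_ψ(v) = ∫ exp(−E(ψ,v,h)) dν(h), defining the joint p_ψ(v,h) = exp(−E(ψ,v,h))/Z(ψ), marginal p_ψ(v) = Z_ψ(v)/Z(ψ), and posterior p_ψ(h|v) = exp(−E(ψ,v,h))/Z_ψ(v). Let q(v), q₁(h|v), p₂(v,h) be respectively a data density on V, a variational conditional density on H, and a variational joint density on V × H, with the absolute continuity and integrability needed for all KL divergences below to be finite. Define J(ψ) = D_KL(q(v) ‖ p_ψ(v)) and J_UL(ψ) = D_KL(q(v)q₁(h|v) ‖ p_ψ(v,h)) − D_KL(p₂(v,h) ‖ p_ψ(v,h)). Then the exact identity J_UL(ψ) − J(ψ) = D_KL(q(v)q₁(h|v) ‖ q(v)p_ψ(h|v)) − D_KL(p₂(v,h) ‖ p_ψ(v,h)) holds. -/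
/-!
This is the chain rule for relative entropy. Pointwise, the log-ratio of `q(v) q₁(h|v)` against
the joint `u/Z` is its log-ratio against `q(v) · u/Zc` (the posterior) plus `log (q(v) / (Zc/Z))`
(the marginal). The second term does not depend on `h`, so integrating it against the normalized
`q₁(·|v)` gives `J`. The `p₂` terms cancel.
-/

open MeasureTheory

theorem mul_log_div_eq_mul_log_div_add_mul_log_div {a b u c Z : ℝ}
    (hu : u ≠ 0) (hc : c ≠ 0) (hZ : Z ≠ 0) :
    a * b * Real.log (a * b / (u / Z)) =
      a * b * Real.log (a * b / (a * (u / c))) + a * b * Real.log (a / (c / Z)) := by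
  rcases eq_or_ne a 0 with rfl | ha
  · simp
  rcases eq_or_ne b 0 with rfl | hb
  · simp
  rw [← mul_add, ← Real.log_mul (by positivity) (by positivity)]
  congr 2
  field_simp

section Product

variable {V H : Type*} [MeasurableSpace V] [MeasurableSpace H] {μ : Measure V} {ν : Measure H}
  [SFinite μ] [SFinite ν]

theorem integral_prod_mul_of_integral_eq_one {f : V → ℝ} {k : V → H → ℝ}
    (hint : Integrable (fun x : V × H => f x.1 * k x.1 x.2) (μ.prod ν))
    (hk : ∀ᵐ v ∂μ, ∫ h, k v h ∂ν = 1) :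
    ∫ x : V × H, f x.1 * k x.1 x.2 ∂(μ.prod ν) = ∫ v, f v ∂μ := by
  rw [integral_prod _ hint]
  refine integral_congr_ae ?_
  filter_upwards [hk] with v hv
  simp only [integral_const_mul, hv, mul_one]

theorem integral_kl_chain_rule {u : V → H → ℝ} (hu : ∀ v h, u v h ≠ 0)
    {Z : ℝ} (hZ : Z ≠ 0) {Zc : V → ℝ} (hZc : ∀ᵐ v ∂μ, Zc v ≠ 0)
    {q : V → ℝ} {q₁ : V → H → ℝ} (hq₁ : ∀ᵐ v ∂μ, ∫ h, q₁ v h ∂ν = 1)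
    (hjoint : Integrable (fun x : V × H => q x.1 * q₁ x.1 x.2 *
      Real.log ((q x.1 * q₁ x.1 x.2) / (u x.1 x.2 / Z))) (μ.prod ν))
    (hcond : Integrable (fun x : V × H => q x.1 * q₁ x.1 x.2 *
      Real.log ((q x.1 * q₁ x.1 x.2) / (q x.1 * (u x.1 x.2 / Zc x.1)))) (μ.prod ν)) :
    ∫ x : V × H, q x.1 * q₁ x.1 x.2 *
        Real.log ((q x.1 * q₁ x.1 x.2) / (u x.1 x.2 / Z)) ∂(μ.prod ν)
      = (∫ x : V × H, q x.1 * q₁ x.1 x.2 *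
          Real.log ((q x.1 * q₁ x.1 x.2) / (q x.1 * (u x.1 x.2 / Zc x.1))) ∂(μ.prod ν))
        + ∫ v, q v * Real.log (q v / (Zc v / Z)) ∂μ := by
  have hsplit : ∀ᵐ x : V × H ∂(μ.prod ν),
      q x.1 * q₁ x.1 x.2 * Real.log ((q x.1 * q₁ x.1 x.2) / (u x.1 x.2 / Z))
        = q x.1 * q₁ x.1 x.2 *
            Real.log ((q x.1 * q₁ x.1 x.2) / (q x.1 * (u x.1 x.2 / Zc x.1)))
          + q x.1 * Real.log (q x.1 / (Zc x.1 / Z)) * q₁ x.1 x.2 := by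
    filter_upwards [Measure.quasiMeasurePreserving_fst.ae hZc] with x hx
    rw [mul_log_div_eq_mul_log_div_add_mul_log_div (hu x.1 x.2) hx hZ]
    ring
  have hmarg : Integrable
      (fun x : V × H => q x.1 * Real.log (q x.1 / (Zc x.1 / Z)) * q₁ x.1 x.2) (μ.prod ν) :=
    (hjoint.sub hcond).congr <| hsplit.mono fun x hx => by simp only [Pi.sub_apply, hx]; ring
  rw [integral_congr_ae hsplit, integral_add hcond hmarg,
    integral_prod_mul_of_integral_eq_one (f := fun v => q v * Real.log (q v / (Zc v / Z)))
      hmarg hq₁]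

end Product

theorem upper_level_gap_identity_general
    {V H : Type*} [MeasurableSpace V] [MeasurableSpace H]
    (μ : Measure V) (ν : Measure H) [SigmaFinite μ] [SigmaFinite ν]
    -- the (fixed-parameter) energy, with finite partition function and
    -- finite conditional normalizers
    (E : V → H → ℝ)
    (Z : ℝ)
    (hZpos : 0 < Z)
    (Zc : V → ℝ)
    (hZcpos : ∀ᵐ v ∂μ, 0 < Zc v)
    -- data density, variational conditional density, variational joint density
    (q : V → ℝ) (q₁ : V → H → ℝ) (p₂ : V → H → ℝ)
    (hq₁norm : ∀ᵐ v ∂μ, ∫ h, q₁ v h ∂ν = 1)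
    -- integrability needed for all the KL divergences involved to be finite
    (hint_qq₁ : Integrable (fun x : V × H => q x.1 * q₁ x.1 x.2 *
      Real.log ((q x.1 * q₁ x.1 x.2) / (Real.exp (-(E x.1 x.2)) / Z))) (μ.prod ν))
    (hint_cond : Integrable (fun x : V × H => q x.1 * q₁ x.1 x.2 *
      Real.log ((q x.1 * q₁ x.1 x.2) / (q x.1 * (Real.exp (-(E x.1 x.2)) / Zc x.1))))
      (μ.prod ν)) :
    -- J_UL − J = D_KL(q q₁ ‖ q p_ψ(h|v)) − D_KL(p₂ ‖ p_ψ(v,h))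
    ((∫ x : V × H, q x.1 * q₁ x.1 x.2 *
        Real.log ((q x.1 * q₁ x.1 x.2) / (Real.exp (-(E x.1 x.2)) / Z)) ∂(μ.prod ν))
      - (∫ x : V × H, p₂ x.1 x.2 *
        Real.log (p₂ x.1 x.2 / (Real.exp (-(E x.1 x.2)) / Z)) ∂(μ.prod ν)))
    - (∫ v, q v * Real.log (q v / (Zc v / Z)) ∂μ)
    = (∫ x : V × H, q x.1 * q₁ x.1 x.2 *
        Real.log ((q x.1 * q₁ x.1 x.2) / (q x.1 * (Real.exp (-(E x.1 x.2)) / Zc x.1)))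
        ∂(μ.prod ν))
      - ∫ x : V × H, p₂ x.1 x.2 *
        Real.log (p₂ x.1 x.2 / (Real.exp (-(E x.1 x.2)) / Z)) ∂(μ.prod ν) := by
  rw [integral_kl_chain_rule (u := fun v h => Real.exp (-(E v h)))
    (fun _ _ => (Real.exp_pos _).ne') hZpos.ne' (hZcpos.mono fun _ h => h.ne')
    hq₁norm hint_qq₁ hint_cond]
  ring

/-- For the EBLVM with joint `p_ψ(v,h) = exp(−E(v,h))/Z`,
marginal `p_ψ(v) = Z_ψ(v)/Z` and posterior `p_ψ(h|v) = exp(−E(v,h))/Z_ψ(v)` (at a fixed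
parameter ψ), data density `q`, variational conditional `q₁` and variational joint `p₂`,
with `J(ψ) = D_KL(q ‖ p_ψ(v))` and
`J_UL(ψ) = D_KL(q q₁ ‖ p_ψ(v,h)) − D_KL(p₂ ‖ p_ψ(v,h))`, the exact identity
`J_UL(ψ) − J(ψ) = D_KL(q q₁ ‖ q p_ψ(h|v)) − D_KL(p₂ ‖ p_ψ(v,h))` holds. -/
theorem upper_level_gap_identity
    {V H : Type*} [MeasurableSpace V] [MeasurableSpace H]
    (μ : Measure V) (ν : Measure H) [SigmaFinite μ] [SigmaFinite ν]
    -- the (fixed-parameter) energy, with finite partition function and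
    -- finite conditional normalizers
    (E : V → H → ℝ)
    (Z : ℝ) (hZdef : Z = ∫ p : V × H, Real.exp (-(E p.1 p.2)) ∂(μ.prod ν))
    (hZint : Integrable (fun p : V × H => Real.exp (-(E p.1 p.2))) (μ.prod ν))
    (hZpos : 0 < Z)
    (Zc : V → ℝ) (hZcdef : ∀ v, Zc v = ∫ h, Real.exp (-(E v h)) ∂ν)
    (hZcint : ∀ᵐ v ∂μ, Integrable (fun h => Real.exp (-(E v h))) ν)
    (hZcpos : ∀ᵐ v ∂μ, 0 < Zc v)
    -- data density, variational conditional density, variational joint density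
    (q : V → ℝ) (q₁ : V → H → ℝ) (p₂ : V → H → ℝ)
    (hq0 : ∀ v, 0 ≤ q v) (hqnorm : ∫ v, q v ∂μ = 1)
    (hq₁0 : ∀ v h, 0 ≤ q₁ v h) (hq₁norm : ∀ᵐ v ∂μ, ∫ h, q₁ v h ∂ν = 1)
    (hp₂0 : ∀ v h, 0 ≤ p₂ v h) (hp₂norm : ∫ p : V × H, p₂ p.1 p.2 ∂(μ.prod ν) = 1)
    -- integrability needed for all the KL divergences involved to be finite
    (hint_J : Integrable (fun v => q v * Real.log (q v / (Zc v / Z))) μ)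
    (hint_qq₁ : Integrable (fun x : V × H => q x.1 * q₁ x.1 x.2 *
      Real.log ((q x.1 * q₁ x.1 x.2) / (Real.exp (-(E x.1 x.2)) / Z))) (μ.prod ν))
    (hint_p₂ : Integrable (fun x : V × H => p₂ x.1 x.2 *
      Real.log (p₂ x.1 x.2 / (Real.exp (-(E x.1 x.2)) / Z))) (μ.prod ν))
    (hint_cond : Integrable (fun x : V × H => q x.1 * q₁ x.1 x.2 *
      Real.log ((q x.1 * q₁ x.1 x.2) / (q x.1 * (Real.exp (-(E x.1 x.2)) / Zc x.1))))
      (μ.prod ν)) :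
    -- J_UL − J = D_KL(q q₁ ‖ q p_ψ(h|v)) − D_KL(p₂ ‖ p_ψ(v,h))
    ((∫ x : V × H, q x.1 * q₁ x.1 x.2 *
        Real.log ((q x.1 * q₁ x.1 x.2) / (Real.exp (-(E x.1 x.2)) / Z)) ∂(μ.prod ν))
      - (∫ x : V × H, p₂ x.1 x.2 *
        Real.log (p₂ x.1 x.2 / (Real.exp (-(E x.1 x.2)) / Z)) ∂(μ.prod ν)))
    - (∫ v, q v * Real.log (q v / (Zc v / Z)) ∂μ)
    = (∫ x : V × H, q x.1 * q₁ x.1 x.2 *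
        Real.log ((q x.1 * q₁ x.1 x.2) / (q x.1 * (Real.exp (-(E x.1 x.2)) / Zc x.1)))
        ∂(μ.prod ν))
      - ∫ x : V × H, p₂ x.1 x.2 *
        Real.log (p₂ x.1 x.2 / (Real.exp (-(E x.1 x.2)) / Z)) ∂(μ.prod ν) :=
  upper_level_gap_identity_general μ ν E Z hZpos Zc hZcpos q q₁ p₂ hq₁norm hint_qq₁ hint_cond
end

section
/- Under the setting of the BiDVL objectives, the gap between the upper-level objective and the original objective is bounded by the lower-level objective with KL divergence: |J_UL(ψ) − J(ψ)| ≤ D_KL(q(v)q₁(h|v) ‖ q(v)p_ψ(h|v)) + D_KL(p₂(v,h) ‖ p_ψ(v,h)), where J(ψ) = D_KL(q(v) ‖ p_ψ(v)) and J_UL(ψ) = D_KL(q(v)q₁(h|v) ‖ p_ψ(v,h)) − D_KL(p₂(v,h) ‖ p_ψ(v,h)), assuming all KL divergences involved are finite. -/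
/-!
By the chain rule for KL divergence, `D(q q₁ ‖ p_ψ(v,h)) = D(q ‖ p_ψ(v)) + D(q q₁ ‖ q p_ψ(h|v))`,
since `p_ψ(v,h) = p_ψ(v) p_ψ(h|v)` with `p_ψ(v) = Zc v / Z`. Hence `J_UL − J` is the difference
`D(q q₁ ‖ q p_ψ(h|v)) − D(p₂ ‖ p_ψ(v,h))` of two numbers that are nonnegative by Gibbs'
inequality, and its absolute value is at most their sum.
-/

open MeasureTheory Real

lemma sub_le_mul_log_div {p r : ℝ} (hp : 0 ≤ p) (hr : 0 ≤ r) (hpr : r = 0 → p = 0) :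
    p - r ≤ p * log (p / r) := by
  rcases hp.eq_or_lt with rfl | hp
  · simpa using hr
  rcases hr.eq_or_lt with rfl | hr
  · exact absurd (hpr rfl) hp.ne'
  have h := one_sub_inv_le_log_of_pos (div_pos hp hr)
  rw [inv_div] at h
  calc p - r = p * (1 - r / p) := by field_simp
    _ ≤ p * log (p / r) := mul_le_mul_of_nonneg_left h hp.le

lemma mul_log_div_sub_mul_log_div {p a b : ℝ} (ha : a ≠ 0) (hb : p ≠ 0 → b ≠ 0) :
    p * log (p / a) - p * log (p / b) = p * log (b / a) := by
  rcases eq_or_ne p 0 with rfl | hp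
  · simp
  rw [log_div hp ha, log_div hp (hb hp), log_div (hb hp) ha]
  ring

section Gibbs

variable {α : Type*} [MeasurableSpace α] {μ : Measure α} {f g : α → ℝ}

theorem integral_sub_integral_le_integral_mul_log_div (hf : Integrable f μ) (hg : Integrable g μ)
    (hf0 : ∀ x, 0 ≤ f x) (hg0 : ∀ x, 0 ≤ g x) (hfg : ∀ x, g x = 0 → f x = 0)
    (hint : Integrable (fun x => f x * log (f x / g x)) μ) :
    ∫ x, f x ∂μ - ∫ x, g x ∂μ ≤ ∫ x, f x * log (f x / g x) ∂μ := by
  rw [← integral_sub hf hg]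
  exact integral_mono (hf.sub hg) hint fun x => sub_le_mul_log_div (hf0 x) (hg0 x) (hfg x)

theorem integral_mul_log_div_nonneg (hf : Integrable f μ) (hg : Integrable g μ)
    (hf0 : ∀ x, 0 ≤ f x) (hg0 : ∀ x, 0 ≤ g x) (hfg : ∀ x, g x = 0 → f x = 0)
    (h_eq : ∫ x, f x ∂μ = ∫ x, g x ∂μ)
    (hint : Integrable (fun x => f x * log (f x / g x)) μ) :
    0 ≤ ∫ x, f x * log (f x / g x) ∂μ := by
  simpa [h_eq] using integral_sub_integral_le_integral_mul_log_div hf hg hf0 hg0 hfg hint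

end Gibbs

section Conditional

variable {V H : Type*} [MeasurableSpace V] [MeasurableSpace H] {μ : Measure V} {ν : Measure H}
  [SFinite μ] [SFinite ν] {q : V → ℝ} {κ ρ : V → H → ℝ}

theorem integral_mul_log_div_conditional_nonneg (hq0 : ∀ v, 0 ≤ q v)
    (hκ0 : ∀ v h, 0 ≤ κ v h) (hκ : ∀ᵐ v ∂μ, ∫ h, κ v h ∂ν = 1)
    (hρ_pos : ∀ᵐ v ∂μ, ∀ h, 0 < ρ v h) (hρ_int : ∀ᵐ v ∂μ, Integrable (ρ v) ν)
    (hρ : ∀ᵐ v ∂μ, ∫ h, ρ v h ∂ν = 1)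
    (hint : Integrable (fun x : V × H => q x.1 * κ x.1 x.2 *
      log (q x.1 * κ x.1 x.2 / (q x.1 * ρ x.1 x.2))) (μ.prod ν)) :
    0 ≤ ∫ x : V × H, q x.1 * κ x.1 x.2 *
      log (q x.1 * κ x.1 x.2 / (q x.1 * ρ x.1 x.2)) ∂(μ.prod ν) := by
  rw [integral_prod _ hint]
  refine integral_nonneg_of_ae ?_
  filter_upwards [hκ, hρ_pos, hρ_int, hρ, hint.prod_right_ae] with v hκv hρv_pos hρv_int hρv hint_v
  refine integral_mul_log_div_nonneg ((integrable_of_integral_eq_one hκv).const_mul _)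
    (hρv_int.const_mul _) (fun h => mul_nonneg (hq0 v) (hκ0 v h))
    (fun h => mul_nonneg (hq0 v) (hρv_pos h).le) (fun h h0 => ?_) ?_ hint_v
  · rw [(mul_eq_zero_iff_right (hρv_pos h).ne').mp h0, zero_mul]
  · rw [integral_const_mul, integral_const_mul, hκv, hρv]

theorem integral_mul_log_div_joint_sub_conditional {m : V → ℝ} {j : V → H → ℝ}
    (hκ : ∀ᵐ v ∂μ, ∫ h, κ v h ∂ν = 1) (hm : ∀ᵐ v ∂μ, m v ≠ 0)
    (hρ : ∀ᵐ v ∂μ, ∀ h, ρ v h ≠ 0) (hj : ∀ᵐ v ∂μ, ∀ h, j v h = m v * ρ v h)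
    (hint_joint : Integrable (fun x : V × H => q x.1 * κ x.1 x.2 *
      log (q x.1 * κ x.1 x.2 / j x.1 x.2)) (μ.prod ν))
    (hint_cond : Integrable (fun x : V × H => q x.1 * κ x.1 x.2 *
      log (q x.1 * κ x.1 x.2 / (q x.1 * ρ x.1 x.2))) (μ.prod ν)) :
    ∫ x : V × H, q x.1 * κ x.1 x.2 * log (q x.1 * κ x.1 x.2 / j x.1 x.2) ∂(μ.prod ν)
      - ∫ x : V × H, q x.1 * κ x.1 x.2 *
          log (q x.1 * κ x.1 x.2 / (q x.1 * ρ x.1 x.2)) ∂(μ.prod ν)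
      = ∫ v, q v * log (q v / m v) ∂μ := by
  rw [← integral_sub hint_joint hint_cond]
  refine (integral_prod _ (hint_joint.sub hint_cond)).trans (integral_congr_ae ?_)
  filter_upwards [hκ, hm, hρ, hj] with v hκv hmv hρv hjv
  have hpointwise : ∀ h, q v * κ v h * log (q v * κ v h / j v h)
      - q v * κ v h * log (q v * κ v h / (q v * ρ v h)) = q v * log (q v / m v) * κ v h := by
    intro h
    rw [mul_log_div_sub_mul_log_div (by rw [hjv]; exact mul_ne_zero hmv (hρv h)), hjv,
      mul_div_mul_right _ _ (hρv h)]
    · ring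
    · intro hqκ
      exact mul_ne_zero (left_ne_zero_of_mul hqκ) (hρv h)
  simp only [Pi.sub_apply, hpointwise, integral_const_mul, hκv, mul_one]

end Conditional

theorem upper_level_gap_bound_general
    {V H : Type*} [MeasurableSpace V] [MeasurableSpace H]
    (μ : Measure V) (ν : Measure H) [SigmaFinite μ] [SigmaFinite ν]
    -- the (fixed-parameter) energy, with finite partition function and
    -- finite conditional normalizers
    (E : V → H → ℝ)
    (Z : ℝ) (hZdef : Z = ∫ p : V × H, Real.exp (-(E p.1 p.2)) ∂(μ.prod ν))
    (hZint : Integrable (fun p : V × H => Real.exp (-(E p.1 p.2))) (μ.prod ν))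
    (hZpos : 0 < Z)
    (Zc : V → ℝ) (hZcdef : ∀ v, Zc v = ∫ h, Real.exp (-(E v h)) ∂ν)
    (hZcint : ∀ᵐ v ∂μ, Integrable (fun h => Real.exp (-(E v h))) ν)
    (hZcpos : ∀ᵐ v ∂μ, 0 < Zc v)
    -- data density, variational conditional density, variational joint density
    (q : V → ℝ) (q₁ : V → H → ℝ) (p₂ : V → H → ℝ)
    (hq0 : ∀ v, 0 ≤ q v)
    (hq₁0 : ∀ v h, 0 ≤ q₁ v h) (hq₁norm : ∀ᵐ v ∂μ, ∫ h, q₁ v h ∂ν = 1)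
    (hp₂0 : ∀ v h, 0 ≤ p₂ v h) (hp₂norm : ∫ p : V × H, p₂ p.1 p.2 ∂(μ.prod ν) = 1)
    -- integrability needed for all the KL divergences involved to be finite
    (hint_qq₁ : Integrable (fun x : V × H => q x.1 * q₁ x.1 x.2 *
      Real.log ((q x.1 * q₁ x.1 x.2) / (Real.exp (-(E x.1 x.2)) / Z))) (μ.prod ν))
    (hint_p₂ : Integrable (fun x : V × H => p₂ x.1 x.2 *
      Real.log (p₂ x.1 x.2 / (Real.exp (-(E x.1 x.2)) / Z))) (μ.prod ν))
    (hint_cond : Integrable (fun x : V × H => q x.1 * q₁ x.1 x.2 *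
      Real.log ((q x.1 * q₁ x.1 x.2) / (q x.1 * (Real.exp (-(E x.1 x.2)) / Zc x.1))))
      (μ.prod ν)) :
    |((∫ x : V × H, q x.1 * q₁ x.1 x.2 *
        Real.log ((q x.1 * q₁ x.1 x.2) / (Real.exp (-(E x.1 x.2)) / Z)) ∂(μ.prod ν))
      - (∫ x : V × H, p₂ x.1 x.2 *
        Real.log (p₂ x.1 x.2 / (Real.exp (-(E x.1 x.2)) / Z)) ∂(μ.prod ν)))
    - (∫ v, q v * Real.log (q v / (Zc v / Z)) ∂μ)|
    ≤ (∫ x : V × H, q x.1 * q₁ x.1 x.2 *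
        Real.log ((q x.1 * q₁ x.1 x.2) / (q x.1 * (Real.exp (-(E x.1 x.2)) / Zc x.1)))
        ∂(μ.prod ν))
      + ∫ x : V × H, p₂ x.1 x.2 *
        Real.log (p₂ x.1 x.2 / (Real.exp (-(E x.1 x.2)) / Z)) ∂(μ.prod ν) := by
  have hposterior_pos : ∀ᵐ v ∂μ, ∀ h, 0 < Real.exp (-(E v h)) / Zc v :=
    hZcpos.mono fun v hv h => div_pos (Real.exp_pos _) hv
  have hjoint_nonneg := integral_mul_log_div_nonneg (integrable_of_integral_eq_one hp₂norm)
    (hZint.div_const Z) (fun x => hp₂0 x.1 x.2) (fun x => by positivity)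
    (fun x hx => absurd hx (by positivity))
    (by rw [hp₂norm, integral_div, ← hZdef, div_self hZpos.ne']) hint_p₂
  have hcond_nonneg := integral_mul_log_div_conditional_nonneg hq0 hq₁0 hq₁norm hposterior_pos
    (hZcint.mono fun v hv => hv.div_const _)
    (hZcpos.mono fun v hv => by rw [integral_div, ← hZcdef, div_self hv.ne'])
    hint_cond
  have hchain := integral_mul_log_div_joint_sub_conditional (m := fun v => Zc v / Z)
    (j := fun v h => Real.exp (-(E v h)) / Z) hq₁norm
    (hZcpos.mono fun v hv => div_ne_zero hv.ne' hZpos.ne')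
    (hposterior_pos.mono fun v hv h => (hv h).ne')
    (hZcpos.mono fun v hv h => by field_simp) hint_qq₁ hint_cond
  rw [abs_le]
  constructor <;> linarith

/-- The gap between the upper-level objective
`J_UL(ψ) = D_KL(q q₁ ‖ p_ψ(v,h)) − D_KL(p₂ ‖ p_ψ(v,h))` and the original objective
`J(ψ) = D_KL(q ‖ p_ψ(v))` is bounded by the lower-level objective with KL divergence:
`|J_UL(ψ) − J(ψ)| ≤ D_KL(q q₁ ‖ q p_ψ(h|v)) + D_KL(p₂ ‖ p_ψ(v,h))`. -/
theorem upper_level_gap_bound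
    {V H : Type*} [MeasurableSpace V] [MeasurableSpace H]
    (μ : Measure V) (ν : Measure H) [SigmaFinite μ] [SigmaFinite ν]
    -- the (fixed-parameter) energy, with finite partition function and
    -- finite conditional normalizers
    (E : V → H → ℝ)
    (Z : ℝ) (hZdef : Z = ∫ p : V × H, Real.exp (-(E p.1 p.2)) ∂(μ.prod ν))
    (hZint : Integrable (fun p : V × H => Real.exp (-(E p.1 p.2))) (μ.prod ν))
    (hZpos : 0 < Z)
    (Zc : V → ℝ) (hZcdef : ∀ v, Zc v = ∫ h, Real.exp (-(E v h)) ∂ν)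
    (hZcint : ∀ᵐ v ∂μ, Integrable (fun h => Real.exp (-(E v h))) ν)
    (hZcpos : ∀ᵐ v ∂μ, 0 < Zc v)
    -- data density, variational conditional density, variational joint density
    (q : V → ℝ) (q₁ : V → H → ℝ) (p₂ : V → H → ℝ)
    (hq0 : ∀ v, 0 ≤ q v) (hqnorm : ∫ v, q v ∂μ = 1)
    (hq₁0 : ∀ v h, 0 ≤ q₁ v h) (hq₁norm : ∀ᵐ v ∂μ, ∫ h, q₁ v h ∂ν = 1)
    (hp₂0 : ∀ v h, 0 ≤ p₂ v h) (hp₂norm : ∫ p : V × H, p₂ p.1 p.2 ∂(μ.prod ν) = 1)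
    -- integrability needed for all the KL divergences involved to be finite
    (hint_J : Integrable (fun v => q v * Real.log (q v / (Zc v / Z))) μ)
    (hint_qq₁ : Integrable (fun x : V × H => q x.1 * q₁ x.1 x.2 *
      Real.log ((q x.1 * q₁ x.1 x.2) / (Real.exp (-(E x.1 x.2)) / Z))) (μ.prod ν))
    (hint_p₂ : Integrable (fun x : V × H => p₂ x.1 x.2 *
      Real.log (p₂ x.1 x.2 / (Real.exp (-(E x.1 x.2)) / Z))) (μ.prod ν))
    (hint_cond : Integrable (fun x : V × H => q x.1 * q₁ x.1 x.2 *
      Real.log ((q x.1 * q₁ x.1 x.2) / (q x.1 * (Real.exp (-(E x.1 x.2)) / Zc x.1))))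
      (μ.prod ν)) :
    |((∫ x : V × H, q x.1 * q₁ x.1 x.2 *
        Real.log ((q x.1 * q₁ x.1 x.2) / (Real.exp (-(E x.1 x.2)) / Z)) ∂(μ.prod ν))
      - (∫ x : V × H, p₂ x.1 x.2 *
        Real.log (p₂ x.1 x.2 / (Real.exp (-(E x.1 x.2)) / Z)) ∂(μ.prod ν)))
    - (∫ v, q v * Real.log (q v / (Zc v / Z)) ∂μ)|
    ≤ (∫ x : V × H, q x.1 * q₁ x.1 x.2 *
        Real.log ((q x.1 * q₁ x.1 x.2) / (q x.1 * (Real.exp (-(E x.1 x.2)) / Zc x.1)))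
        ∂(μ.prod ν))
      + ∫ x : V × H, p₂ x.1 x.2 *
        Real.log (p₂ x.1 x.2 / (Real.exp (-(E x.1 x.2)) / Z)) ∂(μ.prod ν) :=
  upper_level_gap_bound_general μ ν E Z hZdef hZint hZpos Zc hZcdef hZcint hZcpos q q₁ p₂ hq0 hq₁0
    hq₁norm hp₂0 hp₂norm hint_qq₁ hint_p₂ hint_cond
end
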